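/- arXiv:1006.5797 — 2 statements merged into one kernel-verified Lean document; each statement's English description precedes it below -/
import Mathlib

section
/- Let S be a cyclic group of order p^N (p prime, N ≥ 1), and let Ω be the disjoint union over all φ ∈ Aut(S) of the bisets _φS (i.e., copies of S with left action twisted by φ). Then for every subgroup Q ≤ S and every injective homomorphism ψ : Q → S, the Q-S-bisets _QΩ and _ψΩ are isomorphic. -/
open Subgroup

/-- In a finite cyclic group, any injective homomorphism from a subgroup into the group
is given by a power map `x ↦ x ^ m` with `m` coprime to the order of the subgroup
elements; we extract the exponent. -/
lemma stmt_9_aux {S : Type*} [Group S] [IsCyclic S] [Finite S]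
    (Q : Subgroup S) (ψ : Q →* S) (hψ : Function.Injective ψ) :
    ∃ m : ℕ, (∀ q : Q, ψ q = (q : S) ^ m) ∧
      ∀ q0 : Q, Nat.Coprime (orderOf (q0 : S)) m := by
  classical
  letI : Fintype S := Fintype.ofFinite S
  obtain ⟨q0, hq0⟩ := IsCyclic.exists_generator (α := Q)
  -- the order of q0
  set d := orderOf (q0 : S) with hd
  have hdQ : orderOf q0 = d := (Subgroup.orderOf_coe q0).symm
  -- ψ q0 has order d
  have hord : orderOf (ψ q0) = d := by
    rw [orderOf_injective ψ hψ q0, hdQ]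
  -- ψ q0 ∈ zpowers (q0 : S)
  have hmem : ψ q0 ∈ zpowers (q0 : S) := by
    have hd0 : 0 < d := orderOf_pos _
    have hsub : ((zpowers (q0 : S) : Set S).toFinset) ⊆
        Finset.univ.filter (fun a : S => a ^ d = 1) := by
      intro x hx
      rw [Set.mem_toFinset] at hx
      obtain ⟨n, hn⟩ := hx
      simp only [Finset.mem_filter, Finset.mem_univ, true_and]
      rw [← hn, ← zpow_natCast, ← zpow_mul, mul_comm, zpow_mul, zpow_natCast,
        pow_orderOf_eq_one, one_zpow]
    have hcard1 : (Finset.univ.filter (fun a : S => a ^ d = 1)).card ≤ d := by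
      simpa using IsCyclic.card_pow_eq_one_le (α := S) hd0
    have hcard2 : ((zpowers (q0 : S) : Set S).toFinset).card = d := by
      rw [Set.toFinset_card]
      simp only [SetLike.coe_sort_coe]
      rw [Fintype.card_zpowers]
    have heq : ((zpowers (q0 : S) : Set S).toFinset) =
        Finset.univ.filter (fun a : S => a ^ d = 1) :=
      Finset.eq_of_subset_of_card_le hsub (by omega)
    have : ψ q0 ∈ Finset.univ.filter (fun a : S => a ^ d = 1) := by
      simp only [Finset.mem_filter, Finset.mem_univ, true_and]
      rw [← hord, pow_orderOf_eq_one]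
    rw [← heq, Set.mem_toFinset] at this
    exact this
  obtain ⟨m, hm⟩ := ((isOfFinOrder_of_finite _).mem_powers_iff_mem_zpowers).mpr hmem
  dsimp at hm
  -- every element of Q is a power of q0
  have hall : ∀ q : Q, ψ q = (q : S) ^ m := by
    intro q
    obtain ⟨j, hj⟩ := hq0 q
    have hjS : (q : S) = (q0 : S) ^ j := by
      rw [← hj]; push_cast; rfl
    rw [← hj, map_zpow, ← hm]
    push_cast
    rw [← zpow_natCast (q0 : S), ← zpow_mul, mul_comm (m : ℤ) j, zpow_mul, zpow_natCast]
  -- coprimality with d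
  have hcop : Nat.Coprime d m := by
    have : orderOf ((q0 : S) ^ m) = d := by rw [hm]; exact hord
    rw [orderOf_pow] at this
    have hd0 : 0 < d := orderOf_pos _
    have := Nat.div_eq_self.mp (by rw [this])
    rcases this with h | h
    · omega
    · exact Nat.coprime_iff_gcd_eq_one.mpr h
  refine ⟨m, hall, fun q => ?_⟩
  -- orderOf (q : S) divides d
  have hdvd : orderOf (q : S) ∣ d := by
    obtain ⟨j, hj⟩ := hq0 q
    have hjS : (q : S) = (q0 : S) ^ j := by rw [← hj]; push_cast; rfl
    exact orderOf_dvd_of_mem_zpowers ⟨j, hjS.symm⟩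
  exact Nat.Coprime.coprime_dvd_left hdvd hcop


/-- Let `S` be a cyclic group of order `p^N` and let `Ω = ∐_{φ ∈ Aut(S)} ₍φ₎S`
(modelled as `MulAut S × S`, with right action `(φ, s)·g = (φ, sg)` and left action
`g • (φ, s) = (φ, φ(g)s)`).  Then for every subgroup `Q ≤ S` and every injective
homomorphism `ψ : Q → S`, the `Q`-`S`-bisets `_QΩ` and `_ψΩ` are isomorphic. -/
theorem stmt_9 {p N : ℕ} [Fact p.Prime] (hN : 1 ≤ N) {S : Type*} [Group S] [IsCyclic S]
    (hcard : Nat.card S = p ^ N)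
    (Q : Subgroup S) (ψ : Q →* S) (hψ : Function.Injective ψ) :
    ∃ f : (MulAut S × S) ≃ (MulAut S × S),
      (∀ (x : MulAut S × S) (g : S), f (x.1, x.2 * g) = ((f x).1, (f x).2 * g)) ∧
      (∀ (q : Q) (x : MulAut S × S),
        f (x.1, x.1 (q : S) * x.2) = ((f x).1, (f x).1 (ψ q) * (f x).2)) := by
  have hp : p.Prime := Fact.out
  have hfin : Finite S := Nat.finite_of_card_ne_zero (by
    rw [hcard]; exact pow_ne_zero _ hp.ne_zero)
  obtain ⟨m, hall, hcop⟩ := stmt_9_aux Q ψ hψ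
  -- upgrade to an exponent coprime to the order of S
  obtain ⟨n, hall', hcop'⟩ : ∃ n : ℕ, (∀ q : Q, ψ q = (q : S) ^ n) ∧
      (Nat.card S).Coprime n := by
    by_cases hpm : p ∣ m
    · refine ⟨1, fun q => ?_, Nat.coprime_one_right _⟩
      -- in this case every element of Q is trivial
      have h1 : (q : S) = 1 := by
        have hdvd : orderOf (q : S) ∣ p ^ N := by
          rw [← hcard]; exact orderOf_dvd_natCard _
        obtain ⟨k, hk, hko⟩ := (Nat.dvd_prime_pow hp).mp hdvd
        rcases Nat.eq_zero_or_pos k with hk0 | hk0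
        · rw [← orderOf_eq_one_iff, hko, hk0, pow_zero]
        · exfalso
          have hpdvd : p ∣ orderOf (q : S) := hko ▸ dvd_pow_self p hk0.ne'
          have := Nat.eq_one_of_dvd_coprimes (hcop q) hpdvd hpm
          exact hp.one_lt.ne' this
      have hq1 : q = 1 := Subtype.ext h1
      rw [hq1, map_one, OneMemClass.coe_one, one_pow]
    · refine ⟨m, hall, ?_⟩
      rw [hcard]
      exact Nat.Coprime.pow_left _ ((hp.coprime_iff_not_dvd).mpr hpm)
  -- the power map as an automorphism of S
  letI : CommGroup S := IsCyclic.commGroup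
  let α : MulAut S := { powCoprime hcop' with map_mul' := fun a b => mul_pow a b n }
  have hα : ∀ q : Q, α (q : S) = ψ q := fun q => (hall' q).symm
  have hαinv : ∀ q : Q, α⁻¹ (ψ q) = (q : S) := fun q => by
    rw [← hα q]; exact α.symm_apply_apply _
  refine ⟨⟨fun x => (x.1 * α⁻¹, x.2), fun x => (x.1 * α, x.2),
      fun x => by simp [mul_assoc], fun x => by simp [mul_assoc]⟩, fun x g => rfl,
      fun q x => ?_⟩
  simp only [Equiv.coe_fn_mk, Prod.mk.injEq, true_and]
  rw [MulAut.mul_apply, hαinv q]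
end

section
/- Let G be a finite p-group of rank r whose center Z(G) has rank k, with Z(G) ≅ Z/p^{n₁} × ⋯ × Z/p^{n_k} generated by a₁, …, a_k. For each j let χ_j : Z(G) → ℂ be the character sending a_j to a primitive p^{n_j}-th root of unity and a_{j'} to 1 for j' ≠ j, and let θ_j = Ind_{Z(G)}^G χ_j. Then every isotropy subgroup H of the diagonal G-action on S(θ₁) × ⋯ × S(θ_k) satisfies H ∩ Z(G) = {1}, and hence rank(H) ≤ r − k. -/
/-- The rank of a group at the prime `p`: the largest `n` such that `(ℤ/p)ⁿ` embeds. -/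
noncomputable def pRank (p : ℕ) (G : Type*) [Group G] : ℕ :=
  sSup {n : ℕ | ∃ f : (Fin n → Multiplicative (ZMod p)) →* G, Function.Injective f}

/-!
If `g ∈ H` is central, its action on `θ_j` is multiplication by the scalar `χ_j(g)`, so fixing
the nonzero vector `m_j` forces `χ_j(g) = 1`; as the `χ_j` jointly separate the points of
`Z(G)`, `g = 1`. Then `H × Z(G)` embeds in `G`, and `Z(G)`, a product of `k` nontrivial cyclic
`p`-groups, contains `(ℤ/p)ᵏ`, so `rank H + k ≤ r`.
-/

open Function

section PRank

variable {p : ℕ} {G : Type*} [Group G]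

lemma pRank_set_bddAbove (hp : 1 < p) [Finite G] :
    BddAbove {n : ℕ | ∃ f : (Fin n → Multiplicative (ZMod p)) →* G, Injective f} := by
  refine ⟨Nat.card G, fun n ⟨f, hf⟩ => ?_⟩
  have : NeZero p := ⟨by omega⟩
  have hcard := Nat.card_le_card_of_injective f hf
  rw [show Nat.card (Fin n → Multiplicative (ZMod p)) = p ^ n by simp] at hcard
  exact ((Nat.lt_pow_self hp).trans_le hcard).le

lemma le_pRank_of_injective (hp : 1 < p) [Finite G] {n : ℕ}
    (f : (Fin n → Multiplicative (ZMod p)) →* G) (hf : Injective f) : n ≤ pRank p G :=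
  le_csSup (pRank_set_bddAbove hp) ⟨f, hf⟩

lemma exists_injective_of_pRank (hp : 1 < p) (G : Type*) [Group G] [Finite G] :
    ∃ f : (Fin (pRank p G) → Multiplicative (ZMod p)) →* G, Injective f :=
  Nat.sSup_mem ⟨0, by exact ⟨1, fun _ _ _ => Subsingleton.elim _ _⟩⟩ (pRank_set_bddAbove hp)

def Fin.appendMulEquiv (E : Type*) [Mul E] (a b : ℕ) :
    (Fin a → E) × (Fin b → E) ≃* (Fin (a + b) → E) :=
  { Fin.appendEquiv a b with map_mul' := fun x y => funext <| Fin.addCases (by simp) (by simp) }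

lemma pRank_add_pRank_center_le (hp : 1 < p) [Finite G] {H : Subgroup G}
    (hH : H ⊓ Subgroup.center G = ⊥) : pRank p H + pRank p (Subgroup.center G) ≤ pRank p G := by
  obtain ⟨f, hf⟩ := exists_injective_of_pRank hp H
  obtain ⟨g, hg⟩ := exists_injective_of_pRank hp (Subgroup.center G)
  have hcomm : ∀ x y, Commute (H.subtype.comp f x) ((Subgroup.center G).subtype.comp g y) :=
    fun x y => Subgroup.mem_center_iff.mp (g y).2 (f x)
  refine le_pRank_of_injective hp
    (((H.subtype.comp f).noncommCoprod _ hcomm).comp (Fin.appendMulEquiv _ _ _).symm.toMonoidHom) ?_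
  refine ((MonoidHom.noncommCoprod_injective _ _ hcomm).mpr
    ⟨H.subtype_injective.comp hf, Subtype.val_injective.comp hg, ?_⟩).comp (MulEquiv.injective _)
  rw [disjoint_iff, eq_bot_iff, ← hH]
  exact inf_le_inf (by rintro _ ⟨x, rfl⟩; exact (f x).2) (by rintro _ ⟨y, rfl⟩; exact (g y).2)

end PRank

lemma exists_zmod_addMonoidHom_injective_of_dvd_card {A : Type*} [AddGroup A] [Fintype A]
    (p : ℕ) [Fact p.Prime] (hp : p ∣ Fintype.card A) : ∃ f : ZMod p →+ A, Injective f := by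
  obtain ⟨x, hx⟩ := exists_prime_addOrderOf_dvd_card p hp
  refine ⟨ZMod.lift p ⟨zmultiplesHom A x, by simp [← hx, addOrderOf_nsmul_eq_zero]⟩,
    (ZMod.lift_injective (n := p)).mpr fun m hm => ?_⟩
  rw [ZMod.intCast_zmod_eq_zero_iff_dvd, ← hx]
  exact addOrderOf_dvd_iff_zsmul_eq_zero.mpr hm

lemma exists_injective_pi_zmod_to_pi_zmod_pow {p k : ℕ} [Fact p.Prime] (n : Fin k → ℕ)
    (hn : ∀ j, 1 ≤ n j) :
    ∃ f : (Fin k → Multiplicative (ZMod p)) →* ∀ j, Multiplicative (ZMod (p ^ n j)),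
      Injective f := by
  choose f hf using fun j => exists_zmod_addMonoidHom_injective_of_dvd_card (A := ZMod (p ^ n j))
    p (by rw [ZMod.card]; exact dvd_pow_self p (by have := hn j; omega))
  exact ⟨MonoidHom.piMap fun j => (f j).toMultiplicative, Injective.piMap fun j => hf j⟩

open Complex in
lemma exp_two_pi_I_mul_val_div_eq_one_iff {N : ℕ} [NeZero N] (a : ZMod N) :
    exp (2 * Real.pi * I * (a.val / N)) = 1 ↔ a = 0 := by
  rw [← mul_div_assoc, ← ZMod.toCircle_apply, Circle.coe_eq_one,
    ← AddChar.map_zero_eq_one (ZMod.toCircle (N := N)), ZMod.injective_toCircle.eq_iff]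

lemma eq_one_of_isotropy_of_central {G : Type*} [Group G] {f : G → ℂ} (hf : f ≠ 0) {z : G}
    (hz : z ∈ Subgroup.center G) {c : ℂ} (hc : ∀ g, f (g * z) = c * f g)
    (hfix : ∀ x, f (z⁻¹ * x) = f x) : c = 1 := by
  obtain ⟨x, hx⟩ : ∃ x, f x ≠ 0 := by simpa [funext_iff] using hf
  have : c * f x = 1 * f x := by
    rw [← hc, one_mul, Subgroup.mem_center_iff.mp hz x, ← hfix (z * x), inv_mul_cancel_left]
  exact mul_right_cancel₀ hx this

lemma isotropy_inf_center_eq_bot {G ι : Type*} [Group G] {χ : ι → Subgroup.center G → ℂ}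
    (hχ : ∀ z, (∀ j, χ j z = 1) → z = 1) {m : ι → G → ℂ} (hm : ∀ j, m j ≠ 0)
    (hmem : ∀ j (z : Subgroup.center G) g, m j (g * z) = χ j z * m j g) {H : Subgroup G}
    (hH : ∀ g ∈ H, ∀ j x, m j (g⁻¹ * x) = m j x) : H ⊓ Subgroup.center G = ⊥ := by
  refine (Subgroup.eq_bot_iff_forall _).mpr fun g ⟨hgH, hgZ⟩ => congrArg Subtype.val <|
    hχ ⟨g, hgZ⟩ fun j => eq_one_of_isotropy_of_central (hm j) hgZ (hmem j ⟨g, hgZ⟩) (hH g hgH j)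

theorem stmt_15_general (p : ℕ) [Fact p.Prime] {G : Type*} [Group G] [Fintype G]
    (r k : ℕ) (hr : pRank p G = r)
    (nn : Fin k → ℕ) (hnn : ∀ j, 1 ≤ nn j)
    (e : Subgroup.center G ≃* (∀ j : Fin k, Multiplicative (ZMod (p ^ nn j))))
    (χ : Fin k → Subgroup.center G → ℂ)
    (hχ : ∀ (j : Fin k) (z : Subgroup.center G), χ j z = Complex.exp
      (2 * Real.pi * Complex.I *
        (((Multiplicative.toAdd (e z j)).val : ℂ) / ((p : ℂ) ^ nn j))))
    (m : Fin k → G → ℂ)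
    (hmem : ∀ (j : Fin k) (z : Subgroup.center G) (g : G),
      m j (g * (z : G)) = χ j z * m j g)
    (hsphere : ∀ j : Fin k, ∑ x : G, ‖m j x‖ ^ 2 = 1)
    (H : Subgroup G)
    (hH : ∀ g : G, g ∈ H ↔ ∀ (j : Fin k) (x : G), m j (g⁻¹ * x) = m j x) :
    H ⊓ Subgroup.center G = ⊥ ∧ pRank p H ≤ r - k := by
  have hp : 1 < p := (Fact.out : p.Prime).one_lt
  have hχ_faithful : ∀ z, (∀ j, χ j z = 1) → z = 1 := fun z hz => e.injective <| funext fun j => by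
    have : NeZero (p ^ nn j) := ⟨pow_ne_zero _ (by omega)⟩
    rw [map_one, Pi.one_apply, ← toAdd_eq_zero, ← exp_two_pi_I_mul_val_div_eq_one_iff, Nat.cast_pow,
      ← hχ]
    exact hz j
  have hm : ∀ j, m j ≠ 0 := fun j h0 => by simpa [h0] using hsphere j
  have hHZ := isotropy_inf_center_eq_bot hχ_faithful hm hmem fun g hg => (hH g).mp hg
  obtain ⟨f, hf⟩ := exists_injective_pi_zmod_to_pi_zmod_pow (p := p) nn hnn
  have hk : k ≤ pRank p (Subgroup.center G) :=
    le_pRank_of_injective hp (e.symm.toMonoidHom.comp f) (e.symm.injective.comp hf)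
  exact ⟨hHZ, by have := pRank_add_pRank_center_le hp hHZ; omega⟩

/-- Let `G` be a finite `p`-group of rank `r` whose center has rank `k`, with
`Z(G) ≅ ℤ/p^{n₁} × ⋯ × ℤ/p^{n_k}` via `e`.  Let `χ_j` be the character of `Z(G)` sending
the `j`-th generator to a primitive `p^{n_j}`-th root of unity and the others to `1`, and
let `θ_j = Ind_{Z(G)}^G χ_j`, realized as the space of functions `f : G → ℂ` with
`f(g z) = χ_j(z) f(g)`, on which `G` acts by left translation `(g • f)(x) = f(g⁻¹x)`.
If `H` is the isotropy subgroup of a point `(m_1, …, m_k)` of the product of unit spheres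
`S(θ₁) × ⋯ × S(θ_k)` under the diagonal `G`-action, then `H ∩ Z(G) = 1` and
`rank H ≤ r - k`. -/
theorem stmt_15 (p : ℕ) [Fact p.Prime] {G : Type*} [Group G] [Fintype G]
    (hG : IsPGroup p G) (r k : ℕ) (hr : pRank p G = r)
    (nn : Fin k → ℕ) (hnn : ∀ j, 1 ≤ nn j)
    (e : Subgroup.center G ≃* (∀ j : Fin k, Multiplicative (ZMod (p ^ nn j))))
    (χ : Fin k → Subgroup.center G → ℂ)
    (hχ : ∀ (j : Fin k) (z : Subgroup.center G), χ j z = Complex.exp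
      (2 * Real.pi * Complex.I *
        (((Multiplicative.toAdd (e z j)).val : ℂ) / ((p : ℂ) ^ nn j))))
    (m : Fin k → G → ℂ)
    (hmem : ∀ (j : Fin k) (z : Subgroup.center G) (g : G),
      m j (g * (z : G)) = χ j z * m j g)
    (hsphere : ∀ j : Fin k, ∑ x : G, ‖m j x‖ ^ 2 = 1)
    (H : Subgroup G)
    (hH : ∀ g : G, g ∈ H ↔ ∀ (j : Fin k) (x : G), m j (g⁻¹ * x) = m j x) :
    H ⊓ Subgroup.center G = ⊥ ∧ pRank p H ≤ r - k :=
  stmt_15_general p r k hr nn hnn e χ hχ m hmem hsphere H hH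
end
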